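/- Let P_pent(n) = (17+7√5)/22 · φ^{4n} − (40/33)·4ⁿ − 1/3 + (17−7√5)/22 · φ^{−4n} and P(n) = (25+9√5)/22 · φ^{4n} − (5/33)·4^{n+1} − 2/3 + (25−9√5)/22 · φ^{−4n}. Then the limit as n → ∞ of P_pent(n)/P(n+2) exists and equals (65 − 29√5)/10. -/

import Mathlib

open Real Filter

noncomputable def goldenφ : ℝ := (1 + Real.sqrt 5) / 2

noncomputable def Ppent (n : ℕ) : ℝ :=
  (17 + 7 * Real.sqrt 5) / 22 * goldenφ ^ (4 * n)
    - 40 / 33 * 4 ^ n - 1 / 3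
    + (17 - 7 * Real.sqrt 5) / 22 * (goldenφ ^ (4 * n))⁻¹

noncomputable def Ptot (n : ℕ) : ℝ :=
  (25 + 9 * Real.sqrt 5) / 22 * goldenφ ^ (4 * n)
    - 5 / 33 * 4 ^ (n + 1) - 2 / 3
    + (25 - 9 * Real.sqrt 5) / 22 * (goldenφ ^ (4 * n))⁻¹

open Topology

/-!
Both counts are linear combinations of `(φ⁴)ⁿ`, `4ⁿ`, `1` and `(φ⁴)⁻ⁿ`, and `φ⁴ > 4 > 1`, so after
division by `(φ⁴)ⁿ` each tends to its leading coefficient. The limit is therefore the ratio of the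
leading coefficients of `Ppent n` and `Ptot (n + 2)`, an element of `ℚ(√5)` that is computed from
`φ⁴ = (7 + 3√5)/2`.
-/

theorem tendsto_div_pow_of_abs_lt {r q : ℝ} (hr : 1 < r) (hq : |q| < r) (a b c d : ℝ) :
    Tendsto (fun n : ℕ => (a * r ^ n + b * q ^ n + c + d * (r ^ n)⁻¹) / r ^ n) atTop (𝓝 a) := by
  have hr₀ : 0 < r := one_pos.trans hr
  have hqr : Tendsto (fun n : ℕ => (q / r) ^ n) atTop (𝓝 0) :=
    tendsto_pow_atTop_nhds_zero_of_abs_lt_one <| by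
      rwa [abs_div, abs_of_pos hr₀, div_lt_one hr₀]
  have hinv : Tendsto (fun n : ℕ => r⁻¹ ^ n) atTop (𝓝 0) :=
    tendsto_pow_atTop_nhds_zero_of_lt_one (inv_nonneg.2 hr₀.le) (inv_lt_one_of_one_lt₀ hr)
  have hlim := ((tendsto_const_nhds (x := a)).add (hqr.const_mul b) |>.add (hinv.const_mul c)).add
    ((hinv.mul hinv).const_mul d)
  simp only [mul_zero, add_zero] at hlim
  refine hlim.congr fun n => ?_
  have hrn : r ^ n ≠ 0 := pow_ne_zero n hr₀.ne'
  rw [div_pow, inv_pow]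
  field_simp

theorem goldenφ_pow_four : goldenφ ^ 4 = (7 + 3 * √5) / 2 := by
  have h5 : √5 ^ 2 = 5 := sq_sqrt (by norm_num)
  unfold goldenφ
  linear_combination ((√5 ^ 2 + 4 * √5 + 11) / 16) * h5

theorem four_lt_goldenφ_pow_four : 4 < goldenφ ^ 4 := by
  have h2 : 2 < √5 := (lt_sqrt zero_le_two).2 (by norm_num)
  rw [goldenφ_pow_four]
  linarith

theorem one_lt_goldenφ_pow_four : 1 < goldenφ ^ 4 := by
  linarith [four_lt_goldenφ_pow_four]

theorem abs_four_lt_goldenφ_pow_four : |(4 : ℝ)| < goldenφ ^ 4 := by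
  rw [abs_of_pos four_pos]
  exact four_lt_goldenφ_pow_four

theorem tendsto_Ppent_div_pow :
    Tendsto (fun n : ℕ => Ppent n / (goldenφ ^ 4) ^ n) atTop
      (𝓝 ((17 + 7 * √5) / 22)) := by
  refine (tendsto_div_pow_of_abs_lt one_lt_goldenφ_pow_four abs_four_lt_goldenφ_pow_four
    _ (-40 / 33) (-1 / 3) ((17 - 7 * √5) / 22)).congr fun n => ?_
  rw [Ppent, pow_mul]
  ring

theorem tendsto_Ptot_add_two_div_pow :
    Tendsto (fun n : ℕ => Ptot (n + 2) / (goldenφ ^ 4) ^ n) atTop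
      (𝓝 ((25 + 9 * √5) / 22 * (goldenφ ^ 4) ^ 2)) := by
  refine (tendsto_div_pow_of_abs_lt one_lt_goldenφ_pow_four abs_four_lt_goldenφ_pow_four
    _ (-320 / 33) (-2 / 3) ((25 - 9 * √5) / 22 / (goldenφ ^ 4) ^ 2)).congr fun n => ?_
  rw [Ptot, pow_mul]
  ring

theorem boatStar_IDS_jump_limit :
    Tendsto (fun n : ℕ => Ppent n / Ptot (n + 2)) atTop
      (nhds ((65 - 29 * Real.sqrt 5) / 10)) := by
  have h5 : √5 ^ 2 = 5 := sq_sqrt (by norm_num)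
  have hlead : (25 + 9 * √5) / 22 * (goldenφ ^ 4) ^ 2 ≠ 0 := by
    rw [goldenφ_pow_four]
    positivity
  have hlim := tendsto_Ppent_div_pow.div tendsto_Ptot_add_two_div_pow hlead
  have hval : (17 + 7 * √5) / 22 / ((25 + 9 * √5) / 22 * (goldenφ ^ 4) ^ 2)
      = (65 - 29 * √5) / 10 := by
    rw [div_eq_iff hlead, goldenφ_pow_four]
    linear_combination ((2349 * √5 ^ 2 + 12222 * √5 + 15789) / 880) * h5
  rw [hval] at hlim
  refine hlim.congr fun n => ?_
  exact div_div_div_cancel_right₀ (pow_ne_zero n (one_pos.trans one_lt_goldenφ_pow_four).ne') _ _
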